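/- arXiv:0911.3760 — 2 statements merged into one kernel-verified Lean document; each statement's English description precedes it below -/
import Mathlib

section
/- Let F be an r-sort species admitting a composition operator Η, let Ω be a nonempty r-tuple of finite sets, and fix a base point (ω,ρ) ∈ Ω. Then the sets η(F_Η[Ω1] × F[Ω − Ω1]), as Ω1 ranges over the r-tuples with (ω,ρ) ∈ Ω1 ⊆ Ω, are pairwise disjoint, and hence the decomposition F[Ω] = ⋃_{(ω,ρ)∈Ω1⊆Ω} η(F_Η[Ω1] × F[Ω − Ω1]) is a disjoint union. -/
open scoped Classical

noncomputable section

/-- Objects of `Set^r`: `r`-tuples of finite sets (realized as finite subsets of `ℕ`). -/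
abbrev Obj (r : ℕ) := Fin r → Finset ℕ

variable {r : ℕ}

/-- The `r`-tuple of empty sets. -/
def oEmpty (r : ℕ) : Obj r := fun _ => ∅

/-- Componentwise union (the disjoint union `⨿` when the arguments are
componentwise disjoint). -/
def oUnion (Ω₁ Ω₂ : Obj r) : Obj r := fun i => Ω₁ i ∪ Ω₂ i

/-- Componentwise intersection. -/
def oInter (Ω₁ Ω₂ : Obj r) : Obj r := fun i => Ω₁ i ∩ Ω₂ i

/-- Componentwise set difference. -/
def oDiff (Ω₁ Ω₂ : Obj r) : Obj r := fun i => Ω₁ i \ Ω₂ i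

/-- Componentwise disjointness. -/
def oDisj (Ω₁ Ω₂ : Obj r) : Prop := ∀ i, Disjoint (Ω₁ i) (Ω₂ i)

/-- Componentwise containment. -/
def oSub (Ω₁ Ω₂ : Obj r) : Prop := ∀ i, Ω₁ i ⊆ Ω₂ i

/-- A morphism of `Set^r`: an `r`-tuple of bijections between the components. -/
def Mor (Ω₁ Ω₂ : Obj r) : Type := ∀ i, {x // x ∈ Ω₁ i} ≃ {x // x ∈ Ω₂ i}

/-- The identity morphism. -/
def idMor (Ω : Obj r) : Mor Ω Ω := fun _ => Equiv.refl _

/-- Composition of morphisms. -/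
def compMor {Ω₁ Ω₂ Ω₃ : Obj r} (f : Mor Ω₁ Ω₂) (g : Mor Ω₂ Ω₃) : Mor Ω₁ Ω₃ :=
  fun i => (f i).trans (g i)

/-- An `r`-sort species: a (covariant) functor from `Set^r` to the category of
finite sets and bijections.  The value `F[Ω]` is the finite set `obj Ω`, and the
action on a morphism `f` is encoded by the function `map f : ℕ → ℕ` (only its
values on `obj Ω₁` are relevant). -/
structure Species (r : ℕ) where
  obj : Obj r → Finset ℕ
  map : ∀ {Ω₁ Ω₂ : Obj r}, Mor Ω₁ Ω₂ → ℕ → ℕ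
  map_mem : ∀ {Ω₁ Ω₂ : Obj r} (f : Mor Ω₁ Ω₂), ∀ x ∈ obj Ω₁, map f x ∈ obj Ω₂
  map_id : ∀ (Ω : Obj r), ∀ x ∈ obj Ω, map (idMor Ω) x = x
  map_comp : ∀ {Ω₁ Ω₂ Ω₃ : Obj r} (f : Mor Ω₁ Ω₂) (g : Mor Ω₂ Ω₃), ∀ x ∈ obj Ω₁,
    map (compMor f g) x = map g (map f x)

/-- The canonical identification of a disjoint union `s ∪ t` with the sum `s ⊕ t`. -/
def finsetSumEquiv {s t : Finset ℕ} (h : Disjoint s t) :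
    {x // x ∈ s ∪ t} ≃ {x // x ∈ s} ⊕ {x // x ∈ t} :=
  (Equiv.subtypeEquivRight (fun x => by simp)).trans
    (Equiv.Set.union (s := (↑s : Set ℕ)) (t := (↑t : Set ℕ)) (by exact_mod_cast h))

/-- The disjoint union of two bijections, as a bijection between unions. -/
def finsetUnionEquiv {s t s' t' : Finset ℕ} (h : Disjoint s t) (h' : Disjoint s' t')
    (f : {x // x ∈ s} ≃ {x // x ∈ s'}) (g : {x // x ∈ t} ≃ {x // x ∈ t'}) :
    {x // x ∈ s ∪ t} ≃ {x // x ∈ s' ∪ t'} :=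
  (finsetSumEquiv h).trans ((f.sumCongr g).trans (finsetSumEquiv h').symm)

/-- The disjoint union `f ⨿ g` of two morphisms of `Set^r`. -/
def morUnion {Ω₁ Ω₂ Ω₁' Ω₂' : Obj r} (h : oDisj Ω₁ Ω₂) (h' : oDisj Ω₁' Ω₂')
    (f : Mor Ω₁ Ω₁') (g : Mor Ω₂ Ω₂') : Mor (oUnion Ω₁ Ω₂) (oUnion Ω₁' Ω₂') :=
  fun i => finsetUnionEquiv (h i) (h' i) (f i) (g i)

/-- A composition operator `Η` for the species `F`: a natural transformation from
`F × F` (on pairs of componentwise disjoint objects) to `F ∘ ⨿` with injective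
components, satisfying Axiom (D1). -/
structure CompOp {r : ℕ} (F : Species r) where
  η : Obj r → Obj r → ℕ × ℕ → ℕ
  mem_η : ∀ {Ω₁ Ω₂ : Obj r}, oDisj Ω₁ Ω₂ → ∀ x ∈ F.obj Ω₁, ∀ y ∈ F.obj Ω₂,
    η Ω₁ Ω₂ (x, y) ∈ F.obj (oUnion Ω₁ Ω₂)
  inj_η : ∀ {Ω₁ Ω₂ : Obj r}, oDisj Ω₁ Ω₂ →
    Set.InjOn (η Ω₁ Ω₂) ((F.obj Ω₁ : Set ℕ) ×ˢ (F.obj Ω₂ : Set ℕ))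
  natural : ∀ {Ω₁ Ω₂ Ω₁' Ω₂' : Obj r} (h : oDisj Ω₁ Ω₂) (h' : oDisj Ω₁' Ω₂')
    (f : Mor Ω₁ Ω₁') (g : Mor Ω₂ Ω₂'), ∀ x ∈ F.obj Ω₁, ∀ y ∈ F.obj Ω₂,
    F.map (morUnion h h' f g) (η Ω₁ Ω₂ (x, y)) = η Ω₁' Ω₂' (F.map f x, F.map g y)
  D1 : ∀ {Ω₁ Ω₂ Ω₃ Ω₄ : Obj r}, oDisj Ω₁ Ω₂ → oDisj Ω₃ Ω₄ →
    oUnion Ω₁ Ω₂ = oUnion Ω₃ Ω₄ →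
    η Ω₁ Ω₂ '' ((F.obj Ω₁ : Set ℕ) ×ˢ (F.obj Ω₂ : Set ℕ)) ∩
      η Ω₃ Ω₄ '' ((F.obj Ω₃ : Set ℕ) ×ˢ (F.obj Ω₄ : Set ℕ)) =
    η Ω₁ Ω₂ ''
      ((η (oInter Ω₁ Ω₃) (oInter Ω₁ Ω₄) ''
          ((F.obj (oInter Ω₁ Ω₃) : Set ℕ) ×ˢ (F.obj (oInter Ω₁ Ω₄) : Set ℕ))) ×ˢ
        (η (oInter Ω₂ Ω₃) (oInter Ω₂ Ω₄) ''
          ((F.obj (oInter Ω₂ Ω₃) : Set ℕ) ×ˢ (F.obj (oInter Ω₂ Ω₄) : Set ℕ))))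

/-- The set `F_Η[Ω]` of indecomposable elements of `F[Ω]`. -/
def indec (F : Species r) (E : CompOp F) (Ω : Obj r) : Set ℕ :=
  if Ω = oEmpty r then ∅
  else (F.obj Ω : Set ℕ) \
    ⋃ (p : Obj r × Obj r) (_ : oDisj p.1 p.2) (_ : p.1 ≠ oEmpty r) (_ : p.2 ≠ oEmpty r)
      (_ : oUnion p.1 p.2 = Ω),
      E.η p.1 p.2 '' ((F.obj p.1 : Set ℕ) ×ˢ (F.obj p.2 : Set ℕ))

/-- The sets `F_Η^(k)[Ω]` of elements of `F[Ω]` consisting of exactly `k`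
indecomposable components. -/
def indecK (F : Species r) (E : CompOp F) : ℕ → Obj r → Set ℕ
  | 0 => fun Ω => if Ω = oEmpty r then (F.obj (oEmpty r) : Set ℕ) else ∅
  | (k + 1) => fun Ω => ⋃ (Ω₁ : Obj r) (_ : oSub Ω₁ Ω),
      E.η Ω₁ (oDiff Ω Ω₁) '' ((indec F E Ω₁) ×ˢ (indecK F E k (oDiff Ω Ω₁)))

/-- `Ω_I`: the componentwise disjoint union of the family `Ωs` over the index set `s`. -/
def bigU {ι : Type} [DecidableEq ι] (Ωs : ι → Obj r) (s : Finset ι) : Obj r :=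
  fun i => s.biUnion (fun j => Ωs j i)

/-- `Brack F E Ωs leaf s B` says that `B` is an `Η`-bracketing of the sets
`leaf (Ωs i)`, `i ∈ s` (each occurring exactly once).  For `leaf Ω = F[Ω]` this is an
`Η`-bracketing of the `F[Ωs i]`; for `leaf = indec F E` it is an `Η`-bracketing of
the `F_Η[Ωs i]`. -/
inductive Brack (F : Species r) (E : CompOp F) {ι : Type} [DecidableEq ι]
    (Ωs : ι → Obj r) (leaf : Obj r → Set ℕ) : Finset ι → Set ℕ → Prop
  | single (i : ι) : Brack F E Ωs leaf {i} (leaf (Ωs i))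
  | node {s t : Finset ι} {B₁ B₂ : Set ℕ} :
      Disjoint s t → s.Nonempty → t.Nonempty →
      Brack F E Ωs leaf s B₁ → Brack F E Ωs leaf t B₂ →
      Brack F E Ωs leaf (s ∪ t) (E.η (bigU Ωs s) (bigU Ωs t) '' (B₁ ×ˢ B₂))

/-- A `Λ`-weight on `(F, Η)`: Axioms (W0), (W1), (W2). -/
structure Weight {r : ℕ} (F : Species r) (E : CompOp F) (Λ : Type) [CommRing Λ]
    [Algebra ℚ Λ] where
  w : Obj r → ℕ → Λ
  W0 : ∀ x ∈ F.obj (oEmpty r), w (oEmpty r) x = 1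
  W1 : ∀ {Ω Ω' : Obj r} (f : Mor Ω Ω'), ∀ x ∈ F.obj Ω, w Ω' (F.map f x) = w Ω x
  W2 : ∀ {Ω₁ Ω₂ : Obj r}, oDisj Ω₁ Ω₂ → ∀ x ∈ indec F E Ω₁, ∀ y ∈ F.obj Ω₂,
    w (oUnion Ω₁ Ω₂) (E.η Ω₁ Ω₂ (x, y)) = w Ω₁ x * w Ω₂ y

/-- The standard object `([n₁], …, [n_r])`, with `[n] = {1, …, n}`. -/
def stdObj {r : ℕ} (n : Fin r → ℕ) : Obj r := fun i => Finset.Icc 1 (n i)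

/-- The exponential generating function
`Σ_{n₁,…,n_r ≥ 0} Σ_{x ∈ S[([n₁],…,[n_r])]} w(x) z₁^{n₁} ⋯ z_r^{n_r}/(n₁! ⋯ n_r!)`
of a subfamily `S` of a species `F`, with respect to a weight `w`. -/
def GF {r : ℕ} {Λ : Type} [CommRing Λ] [Algebra ℚ Λ] (F : Species r)
    (S : Obj r → Set ℕ) (w : Obj r → ℕ → Λ) : MvPowerSeries (Fin r) Λ :=
  fun d => (algebraMap ℚ Λ (∏ i, (1 / (Nat.factorial (d i)) : ℚ))) *
    ∑ x ∈ (F.obj (stdObj fun i => d i)).filter (fun x => x ∈ S (stdObj fun i => d i)),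
      w (stdObj fun i => d i) x

/-- The exponential `exp f = Σ_{k ≥ 0} f^k / k!` of a multivariate formal power
series `f` with zero constant term (the coefficient of a given monomial only
receives contributions from `k` at most the total degree). -/
def mvExp {σ Λ : Type} [CommRing Λ] [Algebra ℚ Λ] (f : MvPowerSeries σ Λ) :
    MvPowerSeries σ Λ :=
  fun d => ∑ k ∈ Finset.range ((d.sum fun _ m => m) + 1),
    algebraMap ℚ Λ ((1 : ℚ) / (Nat.factorial k)) * MvPowerSeries.coeff d (f ^ k)

/-- The logarithm `log f = Σ_{k ≥ 1} (-1)^{k+1} (f-1)^k / k` of a multivariate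
formal power series `f` with constant term `1`. -/
def mvLog {σ Λ : Type} [CommRing Λ] [Algebra ℚ Λ] (f : MvPowerSeries σ Λ) :
    MvPowerSeries σ Λ :=
  fun d => ∑ k ∈ Finset.Icc 1 (d.sum fun _ m => m),
    algebraMap ℚ Λ ((-1 : ℚ) ^ (k + 1) / k) * MvPowerSeries.coeff d ((f - 1) ^ k)

/-- The refined generating function `G̃F_F(z₁,…,z_r,y)`, a power series in
`z₁, …, z_r` with coefficients that are polynomials in `y` (recorded via
`Polynomial Λ`, the variable `y` being `Polynomial.X`):
`Σ_{n₁,…,n_r ≥ 0} Σ_k Σ_{x ∈ F_Η^(k)[([n₁],…,[n_r])]} y^k w(x) z₁^{n₁}⋯z_r^{n_r}/(n₁!⋯n_r!)`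
(for fixed `n₁, …, n_r` only the `k ≤ n₁ + ⋯ + n_r` contribute, since
`F_Η^(k)[Ω] = ∅ for k > ‖Ω‖`). -/
def tGF {r : ℕ} {Λ : Type} [CommRing Λ] [Algebra ℚ Λ] (F : Species r) (E : CompOp F)
    (w : Obj r → ℕ → Λ) : MvPowerSeries (Fin r) (Polynomial Λ) :=
  fun d => Polynomial.C (algebraMap ℚ Λ (∏ i, (1 / (Nat.factorial (d i)) : ℚ))) *
    ∑ k ∈ Finset.range ((∑ i, d i) + 1), Polynomial.X ^ k *
      Polynomial.C (∑ x ∈ (F.obj (stdObj fun i => d i)).filter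
          (fun x => x ∈ indecK F E k (stdObj fun i => d i)),
        w (stdObj fun i => d i) x)

/-- The species `E(F_Η)` of sets of `F_Η`-structures:  `E(F_Η)[Ω]` consists of all
finite sets `{(x₁,Ω₁),…,(x_k,Ω_k)}` with `x_i ∈ F_Η[Ω_i]`, the `Ω_i` nonempty and
pairwise componentwise disjoint, and `Ω₁ ⨿ ⋯ ⨿ Ω_k = Ω`. -/
def ESet {r : ℕ} (F : Species r) (E : CompOp F) (Ω : Obj r) :
    Set (Finset (ℕ × Obj r)) :=
  { s | (∀ p ∈ s, p.1 ∈ indec F E p.2 ∧ p.2 ≠ oEmpty r) ∧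
        (∀ p ∈ s, ∀ q ∈ s, p ≠ q → oDisj p.2 q.2) ∧
        (∀ i, Ω i = s.biUnion (fun p => p.2 i)) }

/-- The bijection between a finite set and its image under a map injective on it. -/
def imageEquiv {u : Finset ℕ} (g : ℕ → ℕ) (hg : Set.InjOn g (u : Set ℕ)) :
    {x // x ∈ u} ≃ {x // x ∈ u.image g} :=
  Equiv.ofBijective (fun x => ⟨g x, Finset.mem_image_of_mem g x.2⟩) (by
    constructor
    · rintro ⟨a, ha⟩ ⟨b, hb⟩ hab
      exact Subtype.ext (hg (by exact_mod_cast ha) (by exact_mod_cast hb)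
        (congrArg Subtype.val hab))
    · rintro ⟨y, hy⟩
      rcases Finset.mem_image.mp hy with ⟨a, ha, rfl⟩
      exact ⟨⟨a, ha⟩, rfl⟩)

/-- The underlying function `ℕ → ℕ` of the `i`-th component of a morphism. -/
def apMor {Ω Ω' : Obj r} (f : Mor Ω Ω') (i : Fin r) (a : ℕ) : ℕ :=
  if h : a ∈ Ω i then ((f i) ⟨a, h⟩ : ℕ) else a

/-- The componentwise image of a subobject `O ⊆ Ω` under a morphism `f : Ω → Ω'`. -/
def oImage {Ω Ω' : Obj r} (f : Mor Ω Ω') (O : Obj r) : Obj r :=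
  fun i => (O i).image (apMor f i)

/-- The restriction of a morphism `f : Ω → Ω'` to a subobject `O ⊆ Ω`. -/
def restrictMor {Ω Ω' : Obj r} (f : Mor Ω Ω') {O : Obj r} (hO : oSub O Ω) :
    Mor O (oImage f O) :=
  fun i => imageEquiv (apMor f i) (by
    intro a ha b hb hab
    have ha' : a ∈ Ω i := hO i (by exact_mod_cast ha)
    have hb' : b ∈ Ω i := hO i (by exact_mod_cast hb)
    have h1 : ((f i) ⟨a, ha'⟩ : ℕ) = ((f i) ⟨b, hb'⟩ : ℕ) := by
      simpa [apMor, dif_pos ha', dif_pos hb'] using hab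
    have h2 := (f i).injective (Subtype.ext h1)
    exact congrArg Subtype.val h2)

/-- The induced action of a morphism `f : Ω → Ω'` on `E(F_Η)[Ω]`. -/
def Emap {r : ℕ} (F : Species r) {Ω Ω' : Obj r} (f : Mor Ω Ω')
    (s : Finset (ℕ × Obj r)) : Finset (ℕ × Obj r) :=
  s.image (fun p =>
    if h : oSub p.2 Ω then (F.map (restrictMor f h) p.1, oImage f p.2) else p)

section Aux

variable {r : ℕ}

lemma oUnion_empty_right (Ω : Obj r) : oUnion Ω (oEmpty r) = Ω := by
  funext i; simp [oUnion, oEmpty]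

lemma oUnion_empty_left (Ω : Obj r) : oUnion (oEmpty r) Ω = Ω := by
  funext i; simp [oUnion, oEmpty]

lemma oDisj_empty_left (Ω : Obj r) : oDisj (oEmpty r) Ω := fun _ => by
  simp [oEmpty]

lemma oDisj_empty_right (Ω : Obj r) : oDisj Ω (oEmpty r) := fun _ => by
  simp [oEmpty]

lemma oDisj_diff (Ω Ω₁ : Obj r) : oDisj Ω₁ (oDiff Ω Ω₁) := fun i =>
  Finset.disjoint_sdiff

lemma oUnion_diff {Ω Ω₁ : Obj r} (h : oSub Ω₁ Ω) : oUnion Ω₁ (oDiff Ω Ω₁) = Ω := by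
  funext i; exact Finset.union_sdiff_of_subset (h i)

lemma oDiff_self (Ω : Obj r) : oDiff Ω Ω = oEmpty r := by
  funext i; simp [oDiff, oEmpty]

lemma ne_oEmpty_of_mem {Ω₁ : Obj r} {ρ : Fin r} {ω : ℕ} (h : ω ∈ Ω₁ ρ) :
    Ω₁ ≠ oEmpty r := by
  intro he
  rw [he] at h
  simp [oEmpty] at h

variable (F : Species r)

/-- `F[∅]` is nonempty. -/
lemma obj_empty_nonempty (E : CompOp F) (hF : ∃ Ω : Obj r, (F.obj Ω).Nonempty) :
    (F.obj (oEmpty r)).Nonempty := by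
  obtain ⟨Ω₀, x₀, hx₀⟩ := hF
  by_cases h0 : Ω₀ = oEmpty r
  · exact ⟨x₀, h0 ▸ hx₀⟩
  · set N : ℕ := (Finset.univ.sup fun i => (Ω₀ i).sup id) + 1 with hN
    set Ω' : Obj r := fun i => (Ω₀ i).image (· + N) with hΩ'
    have hdisj : oDisj Ω₀ Ω' := by
      intro i
      rw [Finset.disjoint_left]
      intro a ha hb
      have h1 : a ≤ (Ω₀ i).sup id := Finset.le_sup (f := id) ha
      have h2 : (Ω₀ i).sup id ≤ Finset.univ.sup fun i => (Ω₀ i).sup id :=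
        Finset.le_sup (f := fun i => (Ω₀ i).sup id) (Finset.mem_univ i)
      obtain ⟨b, _, hb'⟩ := Finset.mem_image.mp hb
      have hb'' : b + N = a := hb'
      omega
    let f : Mor Ω₀ Ω' := fun i => imageEquiv (· + N) (fun a _ b _ h => by have h2 : a + N = b + N := h; omega)
    have hy : F.map f x₀ ∈ F.obj Ω' := F.map_mem f x₀ hx₀
    have hD1 := E.D1 hdisj hdisj rfl
    have hmem : E.η Ω₀ Ω' (x₀, F.map f x₀) ∈
        E.η Ω₀ Ω' '' ((F.obj Ω₀ : Set ℕ) ×ˢ (F.obj Ω' : Set ℕ)) :=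
      ⟨(x₀, F.map f x₀), ⟨hx₀, hy⟩, rfl⟩
    have hmem2 := hD1 ▸ (Set.mem_inter hmem hmem)
    obtain ⟨⟨u, v⟩, ⟨hu, _⟩, _⟩ := hmem2
    obtain ⟨⟨a, b⟩, ⟨_, hb⟩, _⟩ := hu
    have hI : oInter Ω₀ Ω' = oEmpty r := by
      funext i; exact Finset.disjoint_iff_inter_eq_empty.mp (hdisj i)
    rw [hI] at hb
    exact ⟨b, hb⟩

/-- `F[∅]` is a singleton. -/
lemma obj_empty_card (E : CompOp F) (hF : ∃ Ω : Obj r, (F.obj Ω).Nonempty) :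
    ∃ e, F.obj (oEmpty r) = {e} := by
  have hne := obj_empty_nonempty F E hF
  set s := F.obj (oEmpty r) with hs
  have hinj : Set.InjOn (E.η (oEmpty r) (oEmpty r)) ↑(s ×ˢ s) := by
    rw [Finset.coe_product]
    exact E.inj_η (oDisj_empty_left _)
  have hmaps : ∀ p ∈ s ×ˢ s, E.η (oEmpty r) (oEmpty r) p ∈ s := by
    rintro ⟨a, b⟩ hp
    rw [Finset.mem_product] at hp
    have := E.mem_η (oDisj_empty_left _) a hp.1 b hp.2
    rwa [oUnion_empty_left] at this
  have hcard := Finset.card_le_card_of_injOn _ hmaps hinj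
  rw [Finset.card_product] at hcard
  have h1 : 1 ≤ s.card := Finset.card_pos.mpr hne
  have : s.card = 1 := by nlinarith
  exact Finset.card_eq_one.mp this

lemma eta_empty_left (E : CompOp F) (hF : ∃ Ω : Obj r, (F.obj Ω).Nonempty) (Γ : Obj r) :
    E.η (oEmpty r) Γ '' ((F.obj (oEmpty r) : Set ℕ) ×ˢ (F.obj Γ : Set ℕ)) =
      (F.obj Γ : Set ℕ) := by
  obtain ⟨e, he⟩ := obj_empty_card F E hF
  have heme : e ∈ F.obj (oEmpty r) := by rw [he]; exact Finset.mem_singleton_self e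
  rw [he]
  have hrw : ((({e} : Finset ℕ) : Set ℕ) ×ˢ (F.obj Γ : Set ℕ)) =
      Prod.mk e '' (F.obj Γ : Set ℕ) := by
    rw [Finset.coe_singleton, Set.singleton_prod]
  rw [hrw, Set.image_image]
  have hsub : (fun y => E.η (oEmpty r) Γ (e, y)) '' (F.obj Γ : Set ℕ) ⊆
      (F.obj Γ : Set ℕ) := by
    rintro z ⟨y, hy, rfl⟩
    have := E.mem_η (oDisj_empty_left Γ) e heme y hy
    rwa [oUnion_empty_left] at this
  have hinj : Set.InjOn (fun y => E.η (oEmpty r) Γ (e, y)) (F.obj Γ : Set ℕ) := by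
    intro y hy y' hy' h
    have := E.inj_η (oDisj_empty_left Γ) (Set.mk_mem_prod heme hy)
      (Set.mk_mem_prod heme hy') h
    exact congrArg Prod.snd this
  refine Set.eq_of_subset_of_ncard_le hsub ?_ (Finset.finite_toSet _)
  rw [Set.ncard_image_of_injOn hinj]

lemma eta_empty_right (E : CompOp F) (hF : ∃ Ω : Obj r, (F.obj Ω).Nonempty) (Γ : Obj r) :
    E.η Γ (oEmpty r) '' ((F.obj Γ : Set ℕ) ×ˢ (F.obj (oEmpty r) : Set ℕ)) =
      (F.obj Γ : Set ℕ) := by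
  obtain ⟨e, he⟩ := obj_empty_card F E hF
  have heme : e ∈ F.obj (oEmpty r) := by rw [he]; exact Finset.mem_singleton_self e
  rw [he]
  have hrw : ((F.obj Γ : Set ℕ) ×ˢ (({e} : Finset ℕ) : Set ℕ)) =
      (fun y => (y, e)) '' (F.obj Γ : Set ℕ) := by
    rw [Finset.coe_singleton, Set.prod_singleton]
  rw [hrw, Set.image_image]
  have hsub : (fun y => E.η Γ (oEmpty r) (y, e)) '' (F.obj Γ : Set ℕ) ⊆
      (F.obj Γ : Set ℕ) := by
    rintro z ⟨y, hy, rfl⟩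
    have := E.mem_η (oDisj_empty_right Γ) y hy e heme
    rwa [oUnion_empty_right] at this
  have hinj : Set.InjOn (fun y => E.η Γ (oEmpty r) (y, e)) (F.obj Γ : Set ℕ) := by
    intro y hy y' hy' h
    have := E.inj_η (oDisj_empty_right Γ) (Set.mk_mem_prod hy heme)
      (Set.mk_mem_prod hy' heme) h
    exact congrArg Prod.fst this
  refine Set.eq_of_subset_of_ncard_le hsub ?_ (Finset.finite_toSet _)
  rw [Set.ncard_image_of_injOn hinj]

lemma eta_comm_subset (E : CompOp F) (hF : ∃ Ω : Obj r, (F.obj Ω).Nonempty) {p q : Obj r}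
    (h : oDisj p q) :
    E.η p q '' ((F.obj p : Set ℕ) ×ˢ (F.obj q : Set ℕ)) ⊆
      E.η q p '' ((F.obj q : Set ℕ) ×ˢ (F.obj p : Set ℕ)) := by
  have h' : oDisj q p := fun i => (h i).symm
  have hu : oUnion p q = oUnion q p := by
    funext i; exact Finset.union_comm _ _
  have hD1 := E.D1 h h' hu
  have h1 : oInter p q = oEmpty r := by
    funext i; exact Finset.disjoint_iff_inter_eq_empty.mp (h i)
  have h2 : oInter p p = p := by funext i; exact Finset.inter_self _
  have h3 : oInter q q = q := by funext i; exact Finset.inter_self _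
  have h4 : oInter q p = oEmpty r := by
    funext i; exact Finset.disjoint_iff_inter_eq_empty.mp (h' i)
  rw [h1, h2, h3, h4, eta_empty_left F E hF p, eta_empty_right F E hF q] at hD1
  intro z hz
  exact (hD1.symm.le hz).2

lemma indec_subset (E : CompOp F) (Ω : Obj r) : indec F E Ω ⊆ (F.obj Ω : Set ℕ) := by
  unfold indec; split
  · simp
  · exact Set.diff_subset

lemma indec_not_mem (E : CompOp F) {Ω₁ p₁ p₂ : Obj r} (hd : oDisj p₁ p₂) (h1 : p₁ ≠ oEmpty r)
    (h2 : p₂ ≠ oEmpty r) (hu : oUnion p₁ p₂ = Ω₁) {x : ℕ}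
    (hx : x ∈ E.η p₁ p₂ '' ((F.obj p₁ : Set ℕ) ×ˢ (F.obj p₂ : Set ℕ))) :
    x ∉ indec F E Ω₁ := by
  unfold indec; split
  · simp
  · rintro ⟨-, hnot⟩
    exact hnot (Set.mem_iUnion.mpr ⟨(p₁, p₂), Set.mem_iUnion.mpr ⟨hd,
      Set.mem_iUnion.mpr ⟨h1, Set.mem_iUnion.mpr ⟨h2, Set.mem_iUnion.mpr ⟨hu, hx⟩⟩⟩⟩⟩)

lemma exists_decomp (E : CompOp F) {Ω₁ : Obj r} (hne : Ω₁ ≠ oEmpty r) {x : ℕ}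
    (hx : x ∈ F.obj Ω₁) (hnind : x ∉ indec F E Ω₁) :
    ∃ p₁ p₂ : Obj r, oDisj p₁ p₂ ∧ p₁ ≠ oEmpty r ∧ p₂ ≠ oEmpty r ∧
      oUnion p₁ p₂ = Ω₁ ∧
      x ∈ E.η p₁ p₂ '' ((F.obj p₁ : Set ℕ) ×ˢ (F.obj p₂ : Set ℕ)) := by
  unfold indec at hnind
  rw [if_neg hne] at hnind
  have hxu : x ∈ ⋃ (p : Obj r × Obj r) (_ : oDisj p.1 p.2) (_ : p.1 ≠ oEmpty r)
      (_ : p.2 ≠ oEmpty r) (_ : oUnion p.1 p.2 = Ω₁),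
      E.η p.1 p.2 '' ((F.obj p.1 : Set ℕ) ×ˢ (F.obj p.2 : Set ℕ)) := by
    by_contra h
    exact hnind ⟨hx, h⟩
  simp only [Set.mem_iUnion] at hxu
  obtain ⟨⟨p₁, p₂⟩, hd, h1, h2, hu, hmem⟩ := hxu
  exact ⟨p₁, p₂, hd, h1, h2, hu, hmem⟩

/-- Key D1 consequence: if `x = η(x₁, y)` with `x₁` decomposable as `η_{Γ,Δ}`‑image,
then `x` is also in the image of `η_{Γ, Ω − Γ}`. -/
lemma shrink (E : CompOp F) (hF : ∃ Ω : Obj r, (F.obj Ω).Nonempty)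
    {Ω Ω₁ Γ Δ : Obj r} (hΩ₁ : oSub Ω₁ Ω) (hd : oDisj Γ Δ) (hu : oUnion Γ Δ = Ω₁)
    {x x₁ y : ℕ}
    (hx₁ : x₁ ∈ E.η Γ Δ '' ((F.obj Γ : Set ℕ) ×ˢ (F.obj Δ : Set ℕ)))
    (hy : y ∈ F.obj (oDiff Ω Ω₁)) (hx : x = E.η Ω₁ (oDiff Ω Ω₁) (x₁, y)) :
    x ∈ E.η Γ (oDiff Ω Γ) '' ((F.obj Γ : Set ℕ) ×ˢ (F.obj (oDiff Ω Γ) : Set ℕ)) := by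
  have hΓΩ₁ : oSub Γ Ω₁ := by
    intro i
    have hui : Γ i ∪ Δ i = Ω₁ i := congrFun hu i
    rw [← hui]; exact Finset.subset_union_left
  have hΓΩ : oSub Γ Ω := fun i => (hΓΩ₁ i).trans (hΩ₁ i)
  have hd1 : oDisj Ω₁ (oDiff Ω Ω₁) := oDisj_diff Ω Ω₁
  have hd2 : oDisj Γ (oDiff Ω Γ) := oDisj_diff Ω Γ
  have hu3 : oUnion Ω₁ (oDiff Ω Ω₁) = oUnion Γ (oDiff Ω Γ) := by
    rw [oUnion_diff hΩ₁, oUnion_diff hΓΩ]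
  have hD1 := E.D1 hd1 hd2 hu3
  have r1 : oInter Ω₁ Γ = Γ := by
    funext i; exact Finset.inter_eq_right.mpr (hΓΩ₁ i)
  have r2 : oInter Ω₁ (oDiff Ω Γ) = Δ := by
    funext i
    have hui : Γ i ∪ Δ i = Ω₁ i := congrFun hu i
    ext a
    simp only [oInter, oDiff, Finset.mem_inter, Finset.mem_sdiff]
    constructor
    · rintro ⟨ha1, -, ha3⟩
      rw [← hui] at ha1
      rcases Finset.mem_union.mp ha1 with h | h
      · exact absurd h ha3
      · exact h
    · intro ha
      refine ⟨?_, ?_, ?_⟩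
      · rw [← hui]; exact Finset.mem_union_right _ ha
      · apply hΩ₁ i; rw [← hui]; exact Finset.mem_union_right _ ha
      · exact fun hΓa => (Finset.disjoint_left.mp (hd i)) hΓa ha
  have r3 : oInter (oDiff Ω Ω₁) Γ = oEmpty r := by
    funext i
    ext a
    simp only [oInter, oDiff, oEmpty, Finset.mem_inter, Finset.mem_sdiff,
      Finset.notMem_empty, iff_false]
    rintro ⟨⟨-, ha2⟩, ha3⟩
    exact ha2 (hΓΩ₁ i ha3)
  have r4 : oInter (oDiff Ω Ω₁) (oDiff Ω Γ) = oDiff Ω Ω₁ := by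
    funext i
    ext a
    simp only [oInter, oDiff, Finset.mem_inter, Finset.mem_sdiff]
    constructor
    · rintro ⟨h, -⟩; exact h
    · rintro ⟨h1, h2⟩; exact ⟨⟨h1, h2⟩, h1, fun h => h2 (hΓΩ₁ i h)⟩
  rw [r1, r2, r3, r4, eta_empty_left F E hF (oDiff Ω Ω₁)] at hD1
  have hxRHS : x ∈ E.η Ω₁ (oDiff Ω Ω₁) ''
      ((E.η Γ Δ '' ((F.obj Γ : Set ℕ) ×ˢ (F.obj Δ : Set ℕ))) ×ˢ
        (F.obj (oDiff Ω Ω₁) : Set ℕ)) := ⟨(x₁, y), ⟨hx₁, hy⟩, hx.symm⟩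
  exact (hD1.symm.le hxRHS).2

/-- Covering: by strong induction on the size of `Ω₁`. -/
lemma cover_aux (E : CompOp F) (hF : ∃ Ω : Obj r, (F.obj Ω).Nonempty)
    {Ω : Obj r} (ρ : Fin r) (ω : ℕ) :
    ∀ n : ℕ, ∀ Ω₁ : Obj r, (∑ i, (Ω₁ i).card) ≤ n → oSub Ω₁ Ω → ω ∈ Ω₁ ρ →
    ∀ x, x ∈ E.η Ω₁ (oDiff Ω Ω₁) ''
        ((F.obj Ω₁ : Set ℕ) ×ˢ (F.obj (oDiff Ω Ω₁) : Set ℕ)) →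
    ∃ Γ : Obj r, oSub Γ Ω ∧ ω ∈ Γ ρ ∧
      x ∈ E.η Γ (oDiff Ω Γ) '' ((indec F E Γ) ×ˢ (F.obj (oDiff Ω Γ) : Set ℕ)) := by
  intro n
  induction n with
  | zero =>
    intro Ω₁ hsize hsub hω x hx
    exfalso
    have h1 : 1 ≤ (Ω₁ ρ).card := Finset.card_pos.mpr ⟨ω, hω⟩
    have h2 : (Ω₁ ρ).card ≤ ∑ i, (Ω₁ i).card :=
      Finset.single_le_sum (f := fun i => (Ω₁ i).card)
        (fun i _ => Nat.zero_le _) (Finset.mem_univ ρ)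
    omega
  | succ n ih =>
    intro Ω₁ hsize hsub hω x hx
    obtain ⟨⟨x₁, y⟩, ⟨hx₁, hy⟩, hxe⟩ := hx
    by_cases hind : x₁ ∈ indec F E Ω₁
    · exact ⟨Ω₁, hsub, hω, ⟨(x₁, y), ⟨hind, hy⟩, hxe⟩⟩
    · obtain ⟨p₁, p₂, hd, h1, h2, hu, hmem⟩ :=
        exists_decomp F E (ne_oEmpty_of_mem hω) hx₁ hind
      have hωp : ω ∈ p₁ ρ ∨ ω ∈ p₂ ρ := by
        have hui : p₁ ρ ∪ p₂ ρ = Ω₁ ρ := congrFun hu ρ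
        rw [← hui] at hω
        exact Finset.mem_union.mp hω
      obtain ⟨q₁, q₂, hd', h2', hu', hωq, hmem'⟩ :
          ∃ q₁ q₂ : Obj r, oDisj q₁ q₂ ∧ q₂ ≠ oEmpty r ∧ oUnion q₁ q₂ = Ω₁ ∧
            ω ∈ q₁ ρ ∧
            x₁ ∈ E.η q₁ q₂ '' ((F.obj q₁ : Set ℕ) ×ˢ (F.obj q₂ : Set ℕ)) := by
        rcases hωp with h | h
        · exact ⟨p₁, p₂, hd, h2, hu, h, hmem⟩
        · refine ⟨p₂, p₁, fun i => (hd i).symm, h1, ?_, h,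
            eta_comm_subset F E hF hd hmem⟩
          rw [← hu]; funext i; exact Finset.union_comm _ _
      have hxΓ := shrink F E hF hsub hd' hu' hmem' hy hxe.symm
      have hq₁Ω₁ : oSub q₁ Ω₁ := by
        intro i
        have hui : q₁ i ∪ q₂ i = Ω₁ i := congrFun hu' i
        rw [← hui]; exact Finset.subset_union_left
      have hq₁Ω : oSub q₁ Ω := fun i => (hq₁Ω₁ i).trans (hsub i)
      have hsize' : (∑ i, (q₁ i).card) ≤ n := by
        have hsum : ∑ i, (Ω₁ i).card = (∑ i, (q₁ i).card) + ∑ i, (q₂ i).card := by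
          rw [← Finset.sum_add_distrib]
          refine Finset.sum_congr rfl fun i _ => ?_
          have hui : q₁ i ∪ q₂ i = Ω₁ i := congrFun hu' i
          rw [← hui, Finset.card_union_of_disjoint (hd' i)]
        have hq₂pos : 1 ≤ ∑ i, (q₂ i).card := by
          by_contra h
          push_neg at h
          apply h2'
          funext i
          have hle := Finset.single_le_sum (f := fun i => (q₂ i).card)
            (fun i _ => Nat.zero_le _) (Finset.mem_univ i)
          have hle2 : (q₂ i).card ≤ ∑ x, (q₂ x).card := hle
          have : (q₂ i).card = 0 := by omega
          exact Finset.card_eq_zero.mp this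
        omega
      exact ih q₁ hsize' hq₁Ω hωq x hxΓ

lemma mem_obj_of_mem_eta_image (E : CompOp F) {p q O : Obj r} (hd : oDisj p q)
    (hOq : oUnion p q = O) {u : ℕ}
    (hu : u ∈ E.η p q '' ((F.obj p : Set ℕ) ×ˢ (F.obj q : Set ℕ))) :
    u ∈ F.obj O := by
  obtain ⟨⟨a, b⟩, ⟨ha, hb⟩, rfl⟩ := hu
  have := E.mem_η hd a ha b hb
  rwa [hOq] at this

/-- Disjointness: if `x` lies in both images, then `Ω₁ ⊆ Ω₂`. -/
lemma subset_of_mem_both (E : CompOp F) {Ω Ω₁ Ω₂ : Obj r} {ρ : Fin r} {ω : ℕ}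
    (h1 : oSub Ω₁ Ω) (h2 : oSub Ω₂ Ω) (hω1 : ω ∈ Ω₁ ρ) (hω2 : ω ∈ Ω₂ ρ) {x : ℕ}
    (hxa : x ∈ E.η Ω₁ (oDiff Ω Ω₁) ''
      ((indec F E Ω₁) ×ˢ (F.obj (oDiff Ω Ω₁) : Set ℕ)))
    (hxb : x ∈ E.η Ω₂ (oDiff Ω Ω₂) ''
      ((F.obj Ω₂ : Set ℕ) ×ˢ (F.obj (oDiff Ω Ω₂) : Set ℕ))) :
    oSub Ω₁ Ω₂ := by
  have hd1 : oDisj Ω₁ (oDiff Ω Ω₁) := oDisj_diff Ω Ω₁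
  have hd2 : oDisj Ω₂ (oDiff Ω Ω₂) := oDisj_diff Ω Ω₂
  have hu : oUnion Ω₁ (oDiff Ω Ω₁) = oUnion Ω₂ (oDiff Ω Ω₂) := by
    rw [oUnion_diff h1, oUnion_diff h2]
  have hD1 := E.D1 hd1 hd2 hu
  obtain ⟨⟨x₁, y⟩, ⟨hx₁, hy⟩, hxe⟩ := hxa
  have hxa' : x ∈ E.η Ω₁ (oDiff Ω Ω₁) ''
      ((F.obj Ω₁ : Set ℕ) ×ˢ (F.obj (oDiff Ω Ω₁) : Set ℕ)) :=
    ⟨(x₁, y), ⟨indec_subset F E Ω₁ hx₁, hy⟩, hxe⟩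
  have hxR := hD1 ▸ (Set.mem_inter hxa' hxb)
  obtain ⟨⟨u, v⟩, ⟨huP, hvQ⟩, hxe'⟩ := hxR
  -- the two inner decompositions
  have hdP : oDisj (oInter Ω₁ Ω₂) (oInter Ω₁ (oDiff Ω Ω₂)) := fun i =>
    Finset.disjoint_sdiff.mono Finset.inter_subset_right Finset.inter_subset_right
  have hdQ : oDisj (oInter (oDiff Ω Ω₁) Ω₂) (oInter (oDiff Ω Ω₁) (oDiff Ω Ω₂)) :=
    fun i =>
    Finset.disjoint_sdiff.mono Finset.inter_subset_right Finset.inter_subset_right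
  have huP' : oUnion (oInter Ω₁ Ω₂) (oInter Ω₁ (oDiff Ω Ω₂)) = Ω₁ := by
    funext i
    ext a
    simp only [oUnion, oInter, oDiff, Finset.mem_union, Finset.mem_inter,
      Finset.mem_sdiff]
    constructor
    · rintro (⟨h, -⟩ | ⟨h, -⟩) <;> exact h
    · intro ha
      by_cases hb : a ∈ Ω₂ i
      · exact Or.inl ⟨ha, hb⟩
      · exact Or.inr ⟨ha, h1 i ha, hb⟩
  have huQ' : oUnion (oInter (oDiff Ω Ω₁) Ω₂) (oInter (oDiff Ω Ω₁) (oDiff Ω Ω₂)) =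
      oDiff Ω Ω₁ := by
    funext i
    ext a
    simp only [oUnion, oInter, oDiff, Finset.mem_union, Finset.mem_inter,
      Finset.mem_sdiff]
    constructor
    · rintro (⟨h, -⟩ | ⟨h, -⟩) <;> exact h
    · intro ha
      by_cases hb : a ∈ Ω₂ i
      · exact Or.inl ⟨ha, hb⟩
      · exact Or.inr ⟨ha, ha.1, hb⟩
  have hu_mem : u ∈ F.obj Ω₁ := mem_obj_of_mem_eta_image F E hdP huP' huP
  have hv_mem : v ∈ F.obj (oDiff Ω Ω₁) := mem_obj_of_mem_eta_image F E hdQ huQ' hvQ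
  have hpair := E.inj_η hd1
    (Set.mk_mem_prod hu_mem hv_mem)
    (Set.mk_mem_prod (indec_subset F E Ω₁ hx₁) hy)
    (hxe'.trans hxe.symm)
  have hux₁ : u = x₁ := congrArg Prod.fst hpair
  rw [hux₁] at huP
  -- x₁ indecomposable forces Ω₁ ∩ (Ω − Ω₂) = ∅
  intro i a ha
  by_contra hna
  have hPne : oInter Ω₁ Ω₂ ≠ oEmpty r := by
    intro h
    have : ω ∈ (oInter Ω₁ Ω₂) ρ := Finset.mem_inter.mpr ⟨hω1, hω2⟩
    rw [h] at this
    simp [oEmpty] at this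
  have hQne : oInter Ω₁ (oDiff Ω Ω₂) ≠ oEmpty r := by
    intro h
    have : a ∈ (oInter Ω₁ (oDiff Ω Ω₂)) i :=
      Finset.mem_inter.mpr ⟨ha, Finset.mem_sdiff.mpr ⟨h1 i ha, hna⟩⟩
    rw [h] at this
    simp [oEmpty] at this
  exact indec_not_mem F E hdP hPne hQne huP' huP hx₁

end Aux

/-- The sets `η(F_Η[Ω₁] × F[Ω − Ω₁])`, as `Ω₁` ranges over the subobjects of `Ω`
containing the base point `(ω, ρ)`, are pairwise disjoint; hence the decomposition
`F[Ω] = ⋃_{(ω,ρ) ∈ Ω₁ ⊆ Ω} η(F_Η[Ω₁] × F[Ω − Ω₁])` is a disjoint union. -/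
theorem stmt8 {r : ℕ} (hr : 0 < r) (F : Species r) (E : CompOp F)
    (hF : ∃ Ω : Obj r, (F.obj Ω).Nonempty)
    (Ω : Obj r) (hΩ : Ω ≠ oEmpty r) (ρ : Fin r) (ω : ℕ) (hω : ω ∈ Ω ρ) :
    (∀ Ω₁ Ω₂ : Obj r, oSub Ω₁ Ω → oSub Ω₂ Ω → ω ∈ Ω₁ ρ → ω ∈ Ω₂ ρ → Ω₁ ≠ Ω₂ →
      (E.η Ω₁ (oDiff Ω Ω₁) '' ((indec F E Ω₁) ×ˢ (F.obj (oDiff Ω Ω₁) : Set ℕ))) ∩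
        (E.η Ω₂ (oDiff Ω Ω₂) '' ((indec F E Ω₂) ×ˢ (F.obj (oDiff Ω Ω₂) : Set ℕ))) = ∅) ∧
    (F.obj Ω : Set ℕ) =
      ⋃ (Ω₁ : Obj r) (_ : oSub Ω₁ Ω) (_ : ω ∈ Ω₁ ρ),
        E.η Ω₁ (oDiff Ω Ω₁) '' ((indec F E Ω₁) ×ˢ (F.obj (oDiff Ω Ω₁) : Set ℕ)) := by
  constructor
  · intro Ω₁ Ω₂ hs1 hs2 hω1 hω2 hne
    rw [Set.eq_empty_iff_forall_notMem]
    rintro x ⟨hxa, hxb⟩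
    have hxb' : x ∈ E.η Ω₂ (oDiff Ω Ω₂) ''
        ((F.obj Ω₂ : Set ℕ) ×ˢ (F.obj (oDiff Ω Ω₂) : Set ℕ)) :=
      Set.image_mono (Set.prod_mono (indec_subset F E Ω₂) subset_rfl) hxb
    have hxa' : x ∈ E.η Ω₁ (oDiff Ω Ω₁) ''
        ((F.obj Ω₁ : Set ℕ) ×ˢ (F.obj (oDiff Ω Ω₁) : Set ℕ)) :=
      Set.image_mono (Set.prod_mono (indec_subset F E Ω₁) subset_rfl) hxa
    have hab : oSub Ω₁ Ω₂ :=
      subset_of_mem_both F E hs1 hs2 hω1 hω2 hxa hxb'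
    have hba : oSub Ω₂ Ω₁ :=
      subset_of_mem_both F E hs2 hs1 hω2 hω1 hxb hxa'
    exact hne (funext fun i => Finset.Subset.antisymm (hab i) (hba i))
  · ext x
    simp only [Set.mem_iUnion]
    constructor
    · intro hx
      have hx0 : x ∈ E.η Ω (oDiff Ω Ω) ''
          ((F.obj Ω : Set ℕ) ×ˢ (F.obj (oDiff Ω Ω) : Set ℕ)) := by
        rw [oDiff_self, eta_empty_right F E hF]
        exact hx
      obtain ⟨Γ, hΓs, hΓω, hΓx⟩ := cover_aux F E hF ρ ω (∑ i, (Ω i).card) Ω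
        le_rfl (fun i => subset_rfl) hω x hx0
      exact ⟨Γ, hΓs, hΓω, hΓx⟩
    · rintro ⟨Ω₁, hs, hω1, ⟨⟨x₁, y⟩, ⟨hx₁, hy⟩, rfl⟩⟩
      have := E.mem_η (oDisj_diff Ω Ω₁) x₁ (indec_subset F E Ω₁ hx₁) y hy
      rwa [oUnion_diff hs] at this

end
end

section
/- (m-Permutability for (F_Η,Η)) Let F be an r-sort species admitting a composition operator Η. If Ω1,...,Ωm are pairwise componentwise-disjoint r-tuples of finite sets, then all Η-bracketings of the sets of indecomposables F_Η[Ω1],...,F_Η[Ωm] are equal to each other as subsets of F[Ω1⨿···⨿Ωm]. -/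
open scoped Classical

noncomputable section

variable {r : ℕ}

/-!
If `F[∅] ≠ ∅`, then `F[∅]` is a unit for `η`, and every `Η`-bracketing of
`F_Η[Ω₁], …, F_Η[Ω_m]` is the set of those `z ∈ F[Ω₁ ⨿ ⋯ ⨿ Ω_m]` that lie in
`η(F[C] × F[Ω \ C])` exactly when `C` is a union of some of the `Ωᵢ`; this description does not
depend on the bracketing. The induction on the bracketing runs on Axiom (D1), which says that
`η(x, y)` splits along `(C, Ω \ C)` iff `x` and `y` split along the traces of `C`.
In the degenerate cases all bracketings are empty (unless there is only one factor): an empty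
`Ωᵢ` has no indecomposables, and if `F[∅] = ∅` then (D1) forces `η(F[A] × F[B]) = ∅`.
-/

open Function

lemma oEmpty_eq_bot : oEmpty r = ⊥ := rfl

lemma oUnion_eq_sup (A B : Obj r) : oUnion A B = A ⊔ B := rfl

lemma oInter_eq_inf (A B : Obj r) : oInter A B = A ⊓ B := rfl

lemma oDisj_iff_disjoint {A B : Obj r} : oDisj A B ↔ Disjoint A B := Pi.disjoint_iff.symm

section BigU

variable {ι : Type} [DecidableEq ι] (Ωs : ι → Obj r)

lemma bigU_eq_sup (s : Finset ι) : bigU Ωs s = s.sup Ωs := by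
  funext i
  rw [Finset.sup_apply, Finset.sup_eq_biUnion]
  rfl

@[simp] lemma bigU_empty : bigU Ωs ∅ = ⊥ := by
  rw [bigU_eq_sup, Finset.sup_empty]

@[simp] lemma bigU_singleton (i : ι) : bigU Ωs {i} = Ωs i := by
  rw [bigU_eq_sup, Finset.sup_singleton]

lemma bigU_union (s t : Finset ι) : bigU Ωs (s ∪ t) = bigU Ωs s ⊔ bigU Ωs t := by
  simp only [bigU_eq_sup, Finset.sup_union]

lemma bigU_mono {s t : Finset ι} (h : s ⊆ t) : bigU Ωs s ≤ bigU Ωs t := by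
  simp only [bigU_eq_sup]
  exact Finset.sup_mono h

variable {Ωs}

lemma disjoint_bigU (hd : Pairwise (Disjoint on Ωs)) {s t : Finset ι} (hst : Disjoint s t) :
    Disjoint (bigU Ωs s) (bigU Ωs t) := by
  simp only [bigU_eq_sup, Finset.disjoint_sup_left, Finset.disjoint_sup_right]
  intro j hj i hi
  exact hd fun hij => Finset.disjoint_left.mp hst hi (by rwa [hij])

lemma bigU_inf_bigU (hd : Pairwise (Disjoint on Ωs)) (s t : Finset ι) :
    bigU Ωs s ⊓ bigU Ωs t = bigU Ωs (s ∩ t) := by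
  conv_lhs => rw [← Finset.sdiff_union_inter t s, bigU_union, inf_sup_left,
    (disjoint_bigU hd Finset.disjoint_sdiff).eq_bot, bot_sup_eq, Finset.inter_comm t s,
    inf_eq_right.mpr (bigU_mono Ωs Finset.inter_subset_left)]

lemma inf_mem_range_bigU (hd : Pairwise (Disjoint on Ωs)) (s : Finset ι) {C : Obj r}
    (hC : C ∈ Set.range (bigU Ωs)) : bigU Ωs s ⊓ C ∈ Set.range (bigU Ωs) := by
  obtain ⟨u, rfl⟩ := hC
  exact ⟨s ∩ u, (bigU_inf_bigU hd s u).symm⟩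

lemma mem_range_bigU_iff_inf (hd : Pairwise (Disjoint on Ωs)) {s t : Finset ι} {C : Obj r}
    (hC : C ≤ bigU Ωs s ⊔ bigU Ωs t) :
    C ∈ Set.range (bigU Ωs) ↔
      bigU Ωs s ⊓ C ∈ Set.range (bigU Ωs) ∧ bigU Ωs t ⊓ C ∈ Set.range (bigU Ωs) := by
  refine ⟨fun h => ⟨inf_mem_range_bigU hd s h, inf_mem_range_bigU hd t h⟩, ?_⟩
  rintro ⟨⟨u, hu⟩, ⟨v, hv⟩⟩
  refine ⟨u ∪ v, ?_⟩
  rw [bigU_union, hu, hv, ← inf_sup_right, inf_eq_right.mpr hC]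

lemma mem_range_bigU_iff_of_le (hd : Pairwise (Disjoint on Ωs)) {i : ι} {C : Obj r}
    (hC : C ≤ Ωs i) : C ∈ Set.range (bigU Ωs) ↔ C = ⊥ ∨ C = Ωs i := by
  constructor
  · rintro ⟨u, rfl⟩
    rw [← inf_eq_right.mpr hC, ← bigU_singleton Ωs i, bigU_inf_bigU hd]
    rcases Finset.subset_singleton_iff.mp (Finset.inter_subset_left (s₁ := {i}) (s₂ := u))
      with h | h <;> simp [h]
  · rintro (rfl | rfl)
    exacts [⟨∅, bigU_empty Ωs⟩, ⟨{i}, bigU_singleton Ωs i⟩]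

end BigU

namespace CompOp

variable {F : Species r} (E : CompOp F)

def img (C D : Obj r) : Set ℕ := E.η C D '' ((F.obj C : Set ℕ) ×ˢ (F.obj D : Set ℕ))

lemma img_subset_obj {C D : Obj r} (h : Disjoint C D) : E.img C D ⊆ F.obj (C ⊔ D) := by
  rintro _ ⟨⟨x, y⟩, ⟨hx, hy⟩, rfl⟩
  exact E.mem_η (oDisj_iff_disjoint.mpr h) x hx y hy

lemma img_eq_obj_of_card_le {C D : Obj r} (h : Disjoint C D)
    (hcard : (F.obj (C ⊔ D)).card ≤ (F.obj C).card * (F.obj D).card) :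
    E.img C D = F.obj (C ⊔ D) := by
  have hinj : Set.InjOn (E.η C D) ↑(F.obj C ×ˢ F.obj D) := by
    rw [Finset.coe_product]
    exact E.inj_η (oDisj_iff_disjoint.mpr h)
  have hmaps : Set.MapsTo (E.η C D) ↑(F.obj C ×ˢ F.obj D) ↑(F.obj (C ⊔ D)) := by
    rw [Finset.coe_product]
    exact fun p hp => E.img_subset_obj h ⟨p, hp, rfl⟩
  have hsurj := Finset.surjOn_of_injOn_of_card_le _ hmaps hinj
    (by rwa [Finset.card_product])
  rw [img, ← Finset.coe_product, hsurj.image_eq_of_mapsTo hmaps]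

/-- `η` embeds `F[∅] × F[A]` into `F[A]`, so a nonempty `F[∅]` acts as a unit. -/
lemma img_bot_left (h0 : (F.obj ⊥).Nonempty) (A : Obj r) : E.img ⊥ A = F.obj A := by
  simpa using E.img_eq_obj_of_card_le disjoint_bot_left
    (by simpa using Nat.le_mul_of_pos_left _ h0.card_pos)

lemma img_bot_right (h0 : (F.obj ⊥).Nonempty) (A : Obj r) : E.img A ⊥ = F.obj A := by
  simpa using E.img_eq_obj_of_card_le disjoint_bot_right
    (by simpa using Nat.le_mul_of_pos_right _ h0.card_pos)

/-- Axiom (D1) for two copies of the decomposition `(A, B)` factors every element of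
`η(F[A] × F[B])` through `F[A ⊓ B] = F[∅]`. -/
lemma img_eq_empty (h0 : F.obj ⊥ = ∅) {A B : Obj r} (h : Disjoint A B) : E.img A B = ∅ := by
  have hD := E.D1 (oDisj_iff_disjoint.mpr h) (oDisj_iff_disjoint.mpr h) rfl
  simp only [oInter_eq_inf, inf_idem, h.eq_bot, h.symm.eq_bot, h0] at hD
  simpa [img] using hD

/-- Axiom (D1) for the decompositions `(Ω₁, Ω₂)` and `(C, Ω \ C)` of `Ω = Ω₁ ⊔ Ω₂`, read off
elementwise thanks to the injectivity of `η`. -/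
lemma eta_mem_img_iff {Ω₁ Ω₂ C : Obj r} (h : Disjoint Ω₁ Ω₂) (hC : C ≤ Ω₁ ⊔ Ω₂) {x y : ℕ}
    (hx : x ∈ F.obj Ω₁) (hy : y ∈ F.obj Ω₂) :
    E.η Ω₁ Ω₂ (x, y) ∈ E.img C ((Ω₁ ⊔ Ω₂) \ C) ↔
      x ∈ E.img (Ω₁ ⊓ C) (Ω₁ \ C) ∧ y ∈ E.img (Ω₂ ⊓ C) (Ω₂ \ C) := by
  have h' := oDisj_iff_disjoint.mpr h
  have hD := E.D1 h' (oDisj_iff_disjoint.mpr disjoint_sdiff_self_right)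
    (sup_sdiff_cancel_right hC).symm
  have h₁ : Ω₁ ⊓ ((Ω₁ ⊔ Ω₂) \ C) = Ω₁ \ C := by rw [← inf_sdiff_assoc, inf_sup_self]
  have h₂ : Ω₂ ⊓ ((Ω₁ ⊔ Ω₂) \ C) = Ω₂ \ C := by rw [← inf_sdiff_assoc, sup_comm, inf_sup_self]
  simp only [oInter_eq_inf, h₁, h₂] at hD
  change E.img Ω₁ Ω₂ ∩ E.img C _ = E.η Ω₁ Ω₂ '' (E.img _ _ ×ˢ E.img _ _) at hD
  have hsub : E.img (Ω₁ ⊓ C) (Ω₁ \ C) ×ˢ E.img (Ω₂ ⊓ C) (Ω₂ \ C) ⊆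
      (F.obj Ω₁ : Set ℕ) ×ˢ (F.obj Ω₂ : Set ℕ) := by
    refine Set.prod_mono ?_ ?_ <;>
      simpa only [sup_inf_sdiff] using E.img_subset_obj disjoint_inf_sdiff
  calc _ ↔ E.η Ω₁ Ω₂ (x, y) ∈ E.img Ω₁ Ω₂ ∩ E.img C ((Ω₁ ⊔ Ω₂) \ C) :=
        (and_iff_right ⟨_, ⟨hx, hy⟩, rfl⟩).symm
    _ ↔ (x, y) ∈ E.img (Ω₁ ⊓ C) (Ω₁ \ C) ×ˢ E.img (Ω₂ ⊓ C) (Ω₂ \ C) := by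
        rw [hD]; exact (E.inj_η h').mem_image_iff hsub ⟨hx, hy⟩
    _ ↔ _ := Set.mem_prod

end CompOp

section Indec

variable {F : Species r} (E : CompOp F)

lemma indec_bot : indec F E ⊥ = ∅ := if_pos rfl

lemma indec_subset_obj (Ω : Obj r) : indec F E Ω ⊆ F.obj Ω := by
  rw [indec]
  split_ifs
  exacts [Set.empty_subset _, Set.sdiff_subset]

lemma mem_indec_iff {Ω : Obj r} (hΩ : Ω ≠ ⊥) {z : ℕ} :
    z ∈ indec F E Ω ↔ z ∈ F.obj Ω ∧ ∀ C ≤ Ω, C ≠ ⊥ → C ≠ Ω → z ∉ E.img C (Ω \ C) := by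
  rw [indec, oEmpty_eq_bot, if_neg hΩ]
  simp only [Set.mem_sdiff, Set.mem_iUnion, not_exists, Prod.forall, oDisj_iff_disjoint,
    oUnion_eq_sup]
  refine and_congr_right fun _ => ⟨fun h C hC hC₁ hC₂ => ?_, fun h C D hCD hC hD hU => ?_⟩
  · refine h C (Ω \ C) disjoint_sdiff_self_right hC₁ ?_ (sup_sdiff_cancel_right hC)
    exact fun hbot => hC₂ (le_antisymm hC (sdiff_eq_bot_iff.mp hbot))
  · subst hU
    refine hCD.sup_sdiff_cancel_left ▸ h C le_sup_left hC fun hCD' => hD ?_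
    exact hCD.symm.eq_bot_of_le (hCD' ▸ le_sup_right)

end Indec

namespace CompOp

variable {F : Species r} (E : CompOp F)

def withCuts (Ω : Obj r) (𝒞 : Set (Obj r)) : Set ℕ :=
  {z | z ∈ F.obj Ω ∧ ∀ C ≤ Ω, z ∈ E.img C (Ω \ C) ↔ C ∈ 𝒞}

lemma withCuts_congr {Ω : Obj r} {𝒞 𝒟 : Set (Obj r)} (h : ∀ C ≤ Ω, C ∈ 𝒞 ↔ C ∈ 𝒟) :
    E.withCuts Ω 𝒞 = E.withCuts Ω 𝒟 := by
  ext z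
  exact and_congr_right fun _ => forall₂_congr fun C hC => by rw [h C hC]

lemma indec_eq_withCuts (h0 : (F.obj ⊥).Nonempty) {Ω : Obj r} (hΩ : Ω ≠ ⊥) :
    indec F E Ω = E.withCuts Ω {⊥, Ω} := by
  ext z
  rw [mem_indec_iff E hΩ]
  refine and_congr_right fun hz => forall₂_congr fun C hC => ?_
  by_cases h₁ : C = ⊥
  · simp [h₁, E.img_bot_left h0, hz]
  by_cases h₂ : C = Ω
  · simp [h₂, E.img_bot_right h0, hz]
  · simp [h₁, h₂]

lemma eta_mem_withCuts_iff (h0 : (F.obj ⊥).Nonempty) {Ω₁ Ω₂ : Obj r} {𝒞 : Set (Obj r)}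
    (h : Disjoint Ω₁ Ω₂) (h𝒞 : ∀ C ≤ Ω₁ ⊔ Ω₂, C ∈ 𝒞 ↔ Ω₁ ⊓ C ∈ 𝒞 ∧ Ω₂ ⊓ C ∈ 𝒞)
    {x y : ℕ} (hx : x ∈ F.obj Ω₁) (hy : y ∈ F.obj Ω₂) :
    E.η Ω₁ Ω₂ (x, y) ∈ E.withCuts (Ω₁ ⊔ Ω₂) 𝒞 ↔
      x ∈ E.withCuts Ω₁ 𝒞 ∧ y ∈ E.withCuts Ω₂ 𝒞 := by
  constructor
  · rintro ⟨-, hz⟩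
    refine ⟨⟨hx, fun C hC => ?_⟩, ⟨hy, fun C hC => ?_⟩⟩
    · have hC₂ : Disjoint Ω₂ C := h.symm.mono_right hC
      have := E.eta_mem_img_iff h (le_sup_of_le_left hC) hx hy
      rw [inf_eq_right.mpr hC, hC₂.eq_bot, hC₂.sdiff_eq_left, E.img_bot_left h0,
        Finset.mem_coe, and_iff_left hy] at this
      rw [← this, hz C (le_sup_of_le_left hC)]
    · have hC₁ : Disjoint Ω₁ C := h.mono_right hC
      have := E.eta_mem_img_iff h (le_sup_of_le_right hC) hx hy
      rw [inf_eq_right.mpr hC, hC₁.eq_bot, hC₁.sdiff_eq_left, E.img_bot_left h0,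
        Finset.mem_coe, and_iff_right hx] at this
      rw [← this, hz C (le_sup_of_le_right hC)]
  · rintro ⟨⟨-, hx'⟩, ⟨-, hy'⟩⟩
    refine ⟨E.mem_η (oDisj_iff_disjoint.mpr h) x hx y hy, fun C hC => ?_⟩
    rw [E.eta_mem_img_iff h hC hx hy, h𝒞 C hC, ← sdiff_inf_self_left Ω₁ C,
      ← sdiff_inf_self_left Ω₂ C, hx' _ inf_le_left, hy' _ inf_le_left]

lemma image_withCuts (h0 : (F.obj ⊥).Nonempty) {Ω₁ Ω₂ : Obj r} {𝒞 : Set (Obj r)}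
    (h : Disjoint Ω₁ Ω₂) (h𝒞 : ∀ C ≤ Ω₁ ⊔ Ω₂, C ∈ 𝒞 ↔ Ω₁ ⊓ C ∈ 𝒞 ∧ Ω₂ ⊓ C ∈ 𝒞)
    (h₁ : Ω₁ ∈ 𝒞) :
    E.η Ω₁ Ω₂ '' (E.withCuts Ω₁ 𝒞 ×ˢ E.withCuts Ω₂ 𝒞) = E.withCuts (Ω₁ ⊔ Ω₂) 𝒞 := by
  ext z
  constructor
  · rintro ⟨⟨x, y⟩, ⟨hx, hy⟩, rfl⟩
    exact (E.eta_mem_withCuts_iff h0 h h𝒞 hx.1 hy.1).mpr ⟨hx, hy⟩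
  · intro hz
    have hz₁₂ : z ∈ E.img Ω₁ Ω₂ := by
      simpa [h.sup_sdiff_cancel_left] using (hz.2 Ω₁ le_sup_left).mpr h₁
    obtain ⟨⟨x, y⟩, ⟨hx, hy⟩, rfl⟩ := hz₁₂
    exact ⟨(x, y), (E.eta_mem_withCuts_iff h0 h h𝒞 hx hy).mp hz, rfl⟩

end CompOp

namespace Brack

variable {F : Species r} {E : CompOp F} {ι : Type} [DecidableEq ι] {Ωs : ι → Obj r}
  {leaf : Obj r → Set ℕ} {s : Finset ι} {B : Set ℕ}

lemma eq_leaf_of_eq_singleton (hB : Brack F E Ωs leaf s B) {i : ι} (hs : s = {i}) :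
    B = leaf (Ωs i) := by
  cases hB with
  | single j => rw [Finset.singleton_injective hs]
  | node hst hsn htn =>
    have hcard := congrArg Finset.card hs
    rw [Finset.card_union_of_disjoint hst, Finset.card_singleton] at hcard
    have := hsn.card_pos
    have := htn.card_pos
    omega

lemma eq_empty_of_mem (hB : Brack F E Ωs leaf s B) {i : ι} (hi : i ∈ s)
    (h : leaf (Ωs i) = ∅) : B = ∅ := by
  induction hB with
  | single j => rw [← Finset.mem_singleton.mp hi, h]
  | node _ _ _ _ _ ih₁ ih₂ =>
    rcases Finset.mem_union.mp hi with hi | hi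
    · rw [ih₁ hi, Set.empty_prod, Set.image_empty]
    · rw [ih₂ hi, Set.prod_empty, Set.image_empty]

lemma subset_obj (hB : Brack F E Ωs leaf s B) (hd : Pairwise (Disjoint on Ωs))
    (hleaf : ∀ Ω, leaf Ω ⊆ F.obj Ω) : B ⊆ F.obj (bigU Ωs s) := by
  induction hB with
  | single i => simpa using hleaf (Ωs i)
  | node hst _ _ _ _ ih₁ ih₂ =>
    rw [bigU_union]
    exact (Set.image_mono (Set.prod_mono ih₁ ih₂)).trans (E.img_subset_obj (disjoint_bigU hd hst))

lemma eq_empty_of_obj_bot_eq_empty (hB : Brack F E Ωs leaf s B) (hd : Pairwise (Disjoint on Ωs))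
    (hleaf : ∀ Ω, leaf Ω ⊆ F.obj Ω) (h0 : F.obj ⊥ = ∅) (hs : ∀ i, s ≠ {i}) : B = ∅ := by
  cases hB with
  | single i => exact absurd rfl (hs i)
  | node hst _ _ hB₁ hB₂ =>
    rw [← Set.subset_empty_iff, ← E.img_eq_empty h0 (disjoint_bigU hd hst)]
    exact Set.image_mono (Set.prod_mono (hB₁.subset_obj hd hleaf) (hB₂.subset_obj hd hleaf))

lemma eq_withCuts (hB : Brack F E Ωs (indec F E) s B) (h0 : (F.obj ⊥).Nonempty)
    (hd : Pairwise (Disjoint on Ωs)) (hne : ∀ i, Ωs i ≠ ⊥) :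
    B = E.withCuts (bigU Ωs s) (Set.range (bigU Ωs)) := by
  induction hB with
  | single i =>
    rw [E.indec_eq_withCuts h0 (hne i), bigU_singleton]
    exact E.withCuts_congr fun C hC => (mem_range_bigU_iff_of_le hd hC).symm
  | node hst _ _ _ _ ih₁ ih₂ =>
    rw [ih₁, ih₂, bigU_union]
    exact E.image_withCuts h0 (disjoint_bigU hd hst) (fun C hC => mem_range_bigU_iff_inf hd hC)
      ⟨_, rfl⟩

end Brack

theorem stmt10_general {r : ℕ} (F : Species r) (E : CompOp F)
    (m : ℕ) (Ωs : Fin m → Obj r) (hd : ∀ i j, i ≠ j → oDisj (Ωs i) (Ωs j))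
    (B₁ B₂ : Set ℕ)
    (hB₁ : Brack F E Ωs (indec F E) Finset.univ B₁)
    (hB₂ : Brack F E Ωs (indec F E) Finset.univ B₂) :
    B₁ = B₂ := by
  have hd' : Pairwise (Disjoint on Ωs) := fun i j hij => oDisj_iff_disjoint.mp (hd i j hij)
  by_cases hbot : ∃ i, Ωs i = ⊥
  · obtain ⟨i, hi⟩ := hbot
    have hleaf : indec F E (Ωs i) = ∅ := hi ▸ indec_bot E
    rw [hB₁.eq_empty_of_mem (Finset.mem_univ i) hleaf,
      hB₂.eq_empty_of_mem (Finset.mem_univ i) hleaf]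
  rcases (F.obj ⊥).eq_empty_or_nonempty with h0 | h0
  · by_cases hs : ∃ i, (Finset.univ : Finset (Fin m)) = {i}
    · obtain ⟨i, hi⟩ := hs
      rw [hB₁.eq_leaf_of_eq_singleton hi, hB₂.eq_leaf_of_eq_singleton hi]
    · have hs' := not_exists.mp hs
      rw [hB₁.eq_empty_of_obj_bot_eq_empty hd' (indec_subset_obj E) h0 hs',
        hB₂.eq_empty_of_obj_bot_eq_empty hd' (indec_subset_obj E) h0 hs']
  · have hne := not_exists.mp hbot
    rw [hB₁.eq_withCuts h0 hd' hne, hB₂.eq_withCuts h0 hd' hne]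

/-- `m`-Permutability for `(F_Η, Η)`: all `Η`-bracketings of
`F_Η[Ω₁], …, F_Η[Ω_m]` are equal to each other. -/
theorem stmt10 {r : ℕ} (hr : 0 < r) (F : Species r) (E : CompOp F)
    (hF : ∃ Ω : Obj r, (F.obj Ω).Nonempty)
    (m : ℕ) (Ωs : Fin m → Obj r) (hd : ∀ i j, i ≠ j → oDisj (Ωs i) (Ωs j))
    (B₁ B₂ : Set ℕ)
    (hB₁ : Brack F E Ωs (indec F E) Finset.univ B₁)
    (hB₂ : Brack F E Ωs (indec F E) Finset.univ B₂) :
    B₁ = B₂ :=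
  stmt10_general F E m Ωs hd B₁ B₂ hB₁ hB₂

end
end
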